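/- arXiv:1604.06302 — 2 statements merged into one kernel-verified Lean document; each statement's English description precedes it below -/
import Mathlib

section
/- Let D = (V, A) be a digraph with V = {v_1, ..., v_n}, let τ map each vertex to a set of pairs of nonnegative integers, let Π be a sequence property, and let Δ* be a nonnegative integer with Δ* ≤ n − 1 such that c ≤ Δ* and d ≤ Δ* for every vertex v and every pair (c, d) ∈ τ(v). Suppose there exist pairs (c_1', d_1'), ..., (c_n', d_n') and an integer s' with 2(Δ*)² < s' such that (c_i', d_i') ∈ τ(v_i), c_i' ≥ deg_D^-(v_i) and d_i' ≥ deg_D^+(v_i) for all i, the total increase in the first components Σ_i (c_i' − deg_D^-(v_i)) and in the second components Σ_i (d_i' − deg_D^+(v_i)) both equal s', and the multiset {(c_1', d_1'), ..., (c_n', d_n')} fulfills Π. Then there exists a loopless arc set A' ⊆ (V × V) \ A with |A'| = s' such that deg_{D+A'}(v_i) = (c_i', d_i') for every i; in particular, D + A' satisfies deg_{D+A'}(v) ∈ τ(v) for all v ∈ V and its degree sequence fulfills Π. -/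
/-- Indegree of vertex `v` in the digraph with arc set `A`. -/
def inDeg {V : Type*} [DecidableEq V] (A : Finset (V × V)) (v : V) : ℕ :=
  (A.filter fun a => a.2 = v).card

/-- Outdegree of vertex `v` in the digraph with arc set `A`. -/
def outDeg {V : Type*} [DecidableEq V] (A : Finset (V × V)) (v : V) : ℕ :=
  (A.filter fun a => a.1 = v).card

/-- Degree pair (indegree, outdegree) of vertex `v`. -/
def deg {V : Type*} [DecidableEq V] (A : Finset (V × V)) (v : V) : ℕ × ℕ :=
  (inDeg A v, outDeg A v)

/-- Degree sequence of the digraph with arc set `A`. -/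
def degSeq {V : Type*} [Fintype V] [DecidableEq V] (A : Finset (V × V)) :
    Multiset (ℕ × ℕ) :=
  Finset.univ.val.map (deg A)

/-!
Add arcs to `A` one net arc at a time, keeping every degree at most its target; the in- and
out-deficits stay equal, say to `t`, and `#A' + t = s'` stays constant. If an out-deficient `u`
and an in-deficient `v ≠ u` are not yet joined, add `u → v`. Otherwise every in-deficient vertex
lies in the closed out-neighbourhood `N⁺[u]`, which has at most `Δ` vertices, so at most
`Δ² - t` added arcs end in `N⁺[u]`; likewise at most `Δ² - t` arcs start in `N⁻[v]`. As
`#A' + t > 2Δ²`, some added arc `x → y` avoids both, and replacing it by `u → y` and `x → v`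
raises exactly the out-degree of `u` and the in-degree of `v`.
-/

open Finset

lemma add_single_le {ι : Type*} [DecidableEq ι] {g c : ι → ℕ} {i : ι} (hgc : g ≤ c)
    (hi : g i < c i) : g + Pi.single i 1 ≤ c := by
  intro j
  rcases eq_or_ne j i with rfl | hj
  · simpa using hi
  · simpa [hj] using hgc j

lemma card_filter_mem_le_sum_card_filter {α β : Type*} [DecidableEq β] {s t : Finset α}
    (hst : s ⊆ t) (f : α → β) (H : Finset β) :
    #{a ∈ s | f a ∈ H} ≤ ∑ b ∈ H, #{a ∈ t | f a = b} := by
  refine (card_eq_sum_card_fiberwise (f := f) (t := H) fun a ha => (mem_filter.1 ha).2).trans_le ?_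
  exact sum_le_sum fun b _ => card_le_card (filter_subset_filter _ ((filter_subset _ _).trans hst))

section Deficit

variable {ι : Type*} [Fintype ι] {g c : ι → ℕ}

def totalDeficit (c g : ι → ℕ) : ℕ := ∑ i, (c i - g i)

lemma eq_of_totalDeficit_eq_zero (hgc : g ≤ c) (h : totalDeficit c g = 0) : g = c := by
  funext i
  have hi : c i - g i = 0 := sum_eq_zero_iff.1 h i (mem_univ i)
  have : g i ≤ c i := hgc i
  omega

lemma exists_lt_of_totalDeficit_ne_zero (h : totalDeficit c g ≠ 0) : ∃ i, g i < c i := by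
  obtain ⟨i, -, hi⟩ := exists_ne_zero_of_sum_ne_zero h
  exact ⟨i, by omega⟩

lemma totalDeficit_add_single [DecidableEq ι] {i : ι} (hgc : g ≤ c) (hi : g i < c i) :
    totalDeficit c (g + Pi.single i 1) + 1 = totalDeficit c g := by
  have hle := add_single_le hgc hi
  calc totalDeficit c (g + Pi.single i 1) + 1
      = ∑ j, (c j - (g + Pi.single i 1 : ι → ℕ) j + (Pi.single i 1 : ι → ℕ) j) := by
        simp [totalDeficit, sum_add_distrib]
    _ = totalDeficit c g :=
        sum_congr rfl fun j _ => by
          have := hle j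
          simp only [Pi.add_apply] at this ⊢
          omega

lemma sum_add_totalDeficit_le {Δ : ℕ} (hgc : g ≤ c) (hc : ∀ i, c i ≤ Δ) {H : Finset ι}
    (hH : #H ≤ Δ) (hsupp : ∀ i ∉ H, c i ≤ g i) : ∑ i ∈ H, g i + totalDeficit c g ≤ Δ * Δ := by
  have hdef : totalDeficit c g = ∑ i ∈ H, (c i - g i) :=
    (sum_subset (subset_univ H) fun i _ hi => Nat.sub_eq_zero_of_le (hsupp i hi)).symm
  calc ∑ i ∈ H, g i + totalDeficit c g = ∑ i ∈ H, c i := by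
        rw [hdef, ← sum_add_distrib]
        exact sum_congr rfl fun i _ => Nat.add_sub_cancel' (hgc i)
    _ ≤ #H * Δ := sum_le_card_nsmul H c Δ fun i _ => hc i
    _ ≤ Δ * Δ := Nat.mul_le_mul_right Δ hH

end Deficit

variable {V : Type*} [DecidableEq V]

section Degrees

lemma inDeg_union {s t : Finset (V × V)} (h : Disjoint s t) :
    inDeg (s ∪ t) = inDeg s + inDeg t := by
  ext v
  simp only [inDeg, filter_union, Pi.add_apply]
  exact card_union_of_disjoint (disjoint_filter_filter h)

lemma outDeg_union {s t : Finset (V × V)} (h : Disjoint s t) :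
    outDeg (s ∪ t) = outDeg s + outDeg t := by
  ext v
  simp only [outDeg, filter_union, Pi.add_apply]
  exact card_union_of_disjoint (disjoint_filter_filter h)

lemma inDeg_insert {s : Finset (V × V)} {e : V × V} (h : e ∉ s) :
    inDeg (insert e s) = inDeg s + Pi.single e.2 1 := by
  ext w
  by_cases hw : e.2 = w
  · subst hw
    simp [inDeg, filter_insert, h]
  · simp [inDeg, filter_insert, hw, Ne.symm hw]

lemma outDeg_insert {s : Finset (V × V)} {e : V × V} (h : e ∉ s) :
    outDeg (insert e s) = outDeg s + Pi.single e.1 1 := by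
  ext w
  by_cases hw : e.1 = w
  · subst hw
    simp [outDeg, filter_insert, h]
  · simp [outDeg, filter_insert, hw, Ne.symm hw]

def closedOutNbhd (B : Finset (V × V)) (u : V) : Finset V :=
  insert u ({e ∈ B | e.1 = u}.image Prod.snd)

def closedInNbhd (B : Finset (V × V)) (v : V) : Finset V :=
  insert v ({e ∈ B | e.2 = v}.image Prod.fst)

lemma mem_closedOutNbhd {B : Finset (V × V)} {u y : V} :
    y ∈ closedOutNbhd B u ↔ y = u ∨ (u, y) ∈ B := by
  simp [closedOutNbhd]

lemma mem_closedInNbhd {B : Finset (V × V)} {v x : V} :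
    x ∈ closedInNbhd B v ↔ x = v ∨ (x, v) ∈ B := by
  simp [closedInNbhd]

lemma card_closedOutNbhd_le (B : Finset (V × V)) (u : V) :
    #(closedOutNbhd B u) ≤ outDeg B u + 1 :=
  (card_insert_le _ _).trans (Nat.add_le_add_right card_image_le 1)

lemma card_closedInNbhd_le (B : Finset (V × V)) (v : V) :
    #(closedInNbhd B v) ≤ inDeg B v + 1 :=
  (card_insert_le _ _).trans (Nat.add_le_add_right card_image_le 1)

end Degrees

structure AddsNetArc (A A' A'' : Finset (V × V)) (u v : V) : Prop where
  disjoint : Disjoint A A''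
  loopless : ∀ w, (w, w) ∉ A''
  card_eq : #A'' = #A' + 1
  inDeg_eq : inDeg A'' = inDeg A' + Pi.single v 1
  outDeg_eq : outDeg A'' = outDeg A' + Pi.single u 1

section Augmentation

variable {A A' : Finset (V × V)} {u v : V}

lemma addsNetArc_insert (hdisj : Disjoint A A') (hloop : ∀ w, (w, w) ∉ A') (huv : u ≠ v)
    (hB : (u, v) ∉ A ∪ A') : AddsNetArc A A' (insert (u, v) A') u v := by
  have hA' : (u, v) ∉ A' := fun h => hB (mem_union_right _ h)
  refine ⟨disjoint_insert_right.2 ⟨fun h => hB (mem_union_left _ h), hdisj⟩, fun w hw => ?_,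
    card_insert_of_notMem hA', inDeg_insert hA', outDeg_insert hA'⟩
  rcases mem_insert.1 hw with h | h
  · simp only [Prod.mk.injEq] at h
    exact huv (h.1.symm.trans h.2)
  · exact hloop w h

lemma addsNetArc_switch (hdisj : Disjoint A A') (hloop : ∀ w, (w, w) ∉ A') {x y : V}
    (hxy : (x, y) ∈ A') (hy : y ∉ closedOutNbhd (A ∪ A') u) (hx : x ∉ closedInNbhd (A ∪ A') v) :
    AddsNetArc A A' (insert (u, y) (insert (x, v) (A'.erase (x, y)))) u v := by
  rw [mem_closedOutNbhd, not_or] at hy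
  rw [mem_closedInNbhd, not_or] at hx
  obtain ⟨hyu, huy⟩ := hy
  obtain ⟨hxv, hxv'⟩ := hx
  have hxv_erase : (x, v) ∉ A'.erase (x, y) := fun h =>
    hxv' (mem_union_right _ (mem_of_mem_erase h))
  have huy_insert : (u, y) ∉ insert (x, v) (A'.erase (x, y)) := by
    intro h
    rcases mem_insert.1 h with h | h
    · simp only [Prod.mk.injEq] at h
      exact huy (h.1 ▸ mem_union_right _ hxy)
    · exact huy (mem_union_right _ (mem_of_mem_erase h))
  have hxy_erase : (x, y) ∉ A'.erase (x, y) := notMem_erase _ _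
  refine ⟨?_, fun w hw => ?_, ?_, ?_, ?_⟩
  · simp only [disjoint_insert_right]
    exact ⟨fun h => huy (mem_union_left _ h), fun h => hxv' (mem_union_left _ h),
      disjoint_of_subset_right (erase_subset _ _) hdisj⟩
  · simp only [mem_insert, mem_erase, Prod.mk.injEq] at hw
    rcases hw with ⟨rfl, rfl⟩ | ⟨rfl, rfl⟩ | ⟨-, hw⟩
    exacts [hyu rfl, hxv rfl, hloop w hw]
  · rw [card_insert_of_notMem huy_insert, card_insert_of_notMem hxv_erase,
      card_erase_add_one hxy]
  · rw [inDeg_insert huy_insert, inDeg_insert hxv_erase, ← insert_erase hxy,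
      inDeg_insert hxy_erase, erase_insert hxy_erase, add_right_comm]
  · rw [outDeg_insert huy_insert, outDeg_insert hxv_erase, ← insert_erase hxy,
      outDeg_insert hxy_erase, erase_insert hxy_erase]

end Augmentation

structure IsAdmissibleExtension (A : Finset (V × V)) (c d : V → ℕ) (A' : Finset (V × V)) :
    Prop where
  disjoint : Disjoint A A'
  loopless : ∀ v, (v, v) ∉ A'
  inDeg_le : inDeg (A ∪ A') ≤ c
  outDeg_le : outDeg (A ∪ A') ≤ d

section Completion

variable [Fintype V] {A A' A'' : Finset (V × V)} {c d : V → ℕ} {Δ : ℕ}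

lemma exists_arc_not_mem_closedNbhds {B : Finset (V × V)} (hA'B : A' ⊆ B) (hc : ∀ v, c v ≤ Δ)
    (hd : ∀ v, d v ≤ Δ) (hin : inDeg B ≤ c) (hout : outDeg B ≤ d) {u v : V}
    (hu : outDeg B u < d u) (hv : inDeg B v < c v)
    (hsat : ∀ x y, outDeg B x < d x → inDeg B y < c y → x ≠ y → (x, y) ∈ B)
    (hbig : 2 * Δ ^ 2 < #A' + totalDeficit c (inDeg B) + totalDeficit d (outDeg B)) :
    ∃ x y, (x, y) ∈ A' ∧ y ∉ closedOutNbhd B u ∧ x ∉ closedInNbhd B v := by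
  set H := closedOutNbhd B u
  set T := closedInNbhd B v
  have hH : #H ≤ Δ := (card_closedOutNbhd_le B u).trans (by have := hd u; omega)
  have hT : #T ≤ Δ := (card_closedInNbhd_le B v).trans (by have := hc v; omega)
  have hHsupp : ∀ y ∉ H, c y ≤ inDeg B y := fun y hy => by
    by_contra! hy'
    exact hy (mem_closedOutNbhd.2 (or_iff_not_imp_left.2 fun hyu => hsat u y hu hy' (Ne.symm hyu)))
  have hTsupp : ∀ x ∉ T, d x ≤ outDeg B x := fun x hx => by
    by_contra! hx'
    exact hx (mem_closedInNbhd.2 (or_iff_not_imp_left.2 fun hxv => hsat x v hx' hv hxv))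
  have hcardH : #{e ∈ A' | e.2 ∈ H} ≤ ∑ y ∈ H, inDeg B y :=
    card_filter_mem_le_sum_card_filter hA'B Prod.snd H
  have hcardT : #{e ∈ A' | e.1 ∈ T} ≤ ∑ x ∈ T, outDeg B x :=
    card_filter_mem_le_sum_card_filter hA'B Prod.fst T
  have hsumH := sum_add_totalDeficit_le hin hc hH hHsupp
  have hsumT := sum_add_totalDeficit_le hout hd hT hTsupp
  by_contra! hno
  have hcover : A' ⊆ {e ∈ A' | e.2 ∈ H} ∪ {e ∈ A' | e.1 ∈ T} := by
    rintro ⟨x, y⟩ he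
    simp only [mem_union, mem_filter, he, true_and]
    exact or_iff_not_imp_left.2 (hno x y he)
  have := (card_le_card hcover).trans (card_union_le _ _)
  rw [sq] at hbig
  omega

lemma IsAdmissibleExtension.exists_addsNetArc (E : IsAdmissibleExtension A c d A')
    (hc : ∀ v, c v ≤ Δ) (hd : ∀ v, d v ≤ Δ)
    (hc₀ : totalDeficit c (inDeg (A ∪ A')) ≠ 0) (hd₀ : totalDeficit d (outDeg (A ∪ A')) ≠ 0)
    (hbig : 2 * Δ ^ 2 <
      #A' + totalDeficit c (inDeg (A ∪ A')) + totalDeficit d (outDeg (A ∪ A'))) :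
    ∃ u v A'', outDeg (A ∪ A') u < d u ∧ inDeg (A ∪ A') v < c v ∧ AddsNetArc A A' A'' u v := by
  by_cases hfree : ∃ u v, outDeg (A ∪ A') u < d u ∧ inDeg (A ∪ A') v < c v ∧ u ≠ v ∧
      (u, v) ∉ A ∪ A'
  · obtain ⟨u, v, hu, hv, huv, hB⟩ := hfree
    exact ⟨u, v, _, hu, hv, addsNetArc_insert E.disjoint E.loopless huv hB⟩
  · simp only [not_exists, not_and, not_not] at hfree
    obtain ⟨u, hu⟩ := exists_lt_of_totalDeficit_ne_zero hd₀
    obtain ⟨v, hv⟩ := exists_lt_of_totalDeficit_ne_zero hc₀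
    obtain ⟨x, y, hxy, hy, hx⟩ := exists_arc_not_mem_closedNbhds subset_union_right hc hd
      E.inDeg_le E.outDeg_le hu hv hfree hbig
    exact ⟨u, v, _, hu, hv, addsNetArc_switch E.disjoint E.loopless hxy hy hx⟩

lemma IsAdmissibleExtension.of_addsNetArc {u v : V} (E : IsAdmissibleExtension A c d A')
    (h : AddsNetArc A A' A'' u v) (hu : outDeg (A ∪ A') u < d u) (hv : inDeg (A ∪ A') v < c v) :
    IsAdmissibleExtension A c d A'' ∧
      totalDeficit c (inDeg (A ∪ A'')) + 1 = totalDeficit c (inDeg (A ∪ A')) ∧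
      totalDeficit d (outDeg (A ∪ A'')) + 1 = totalDeficit d (outDeg (A ∪ A')) := by
  have hin : inDeg (A ∪ A'') = inDeg (A ∪ A') + Pi.single v 1 := by
    rw [inDeg_union h.disjoint, inDeg_union E.disjoint, h.inDeg_eq, add_assoc]
  have hout : outDeg (A ∪ A'') = outDeg (A ∪ A') + Pi.single u 1 := by
    rw [outDeg_union h.disjoint, outDeg_union E.disjoint, h.outDeg_eq, add_assoc]
  rw [hin, hout]
  exact ⟨⟨h.disjoint, h.loopless, hin ▸ add_single_le E.inDeg_le hv,
    hout ▸ add_single_le E.outDeg_le hu⟩,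
    totalDeficit_add_single E.inDeg_le hv, totalDeficit_add_single E.outDeg_le hu⟩

theorem IsAdmissibleExtension.exists_completion (hc : ∀ v, c v ≤ Δ) (hd : ∀ v, d v ≤ Δ) {t : ℕ}
    (E : IsAdmissibleExtension A c d A') (hct : totalDeficit c (inDeg (A ∪ A')) = t)
    (hdt : totalDeficit d (outDeg (A ∪ A')) = t) (hbig : 2 * Δ ^ 2 < #A' + t) :
    ∃ A'', IsAdmissibleExtension A c d A'' ∧ #A'' = #A' + t ∧
      inDeg (A ∪ A'') = c ∧ outDeg (A ∪ A'') = d := by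
  induction t generalizing A' with
  | zero =>
    exact ⟨A', E, rfl, eq_of_totalDeficit_eq_zero E.inDeg_le hct,
      eq_of_totalDeficit_eq_zero E.outDeg_le hdt⟩
  | succ t ih =>
    obtain ⟨u, v, A'', hu, hv, h⟩ := E.exists_addsNetArc hc hd (by omega) (by omega) (by omega)
    obtain ⟨E'', hc'', hd''⟩ := E.of_addsNetArc h hu hv
    obtain ⟨A₃, E₃, hcard, hin, hout⟩ := ih E'' (by omega) (by omega) (by rw [h.card_eq]; omega)
    exact ⟨A₃, E₃, by rw [hcard, h.card_eq]; ring, hin, hout⟩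

end Completion

theorem number_solution_transfer_general (n : ℕ) (A : Finset (Fin n × Fin n))
    (τ : Fin n → Set (ℕ × ℕ)) (Prp : Multiset (ℕ × ℕ) → Prop)
    (Δ : ℕ)
    (hτΔ : ∀ v : Fin n, ∀ p ∈ τ v, p.1 ≤ Δ ∧ p.2 ≤ Δ)
    (c' d' : Fin n → ℕ) (s' : ℕ)
    (hs' : 2 * Δ ^ 2 < s')
    (hτ : ∀ i : Fin n, (c' i, d' i) ∈ τ i)
    (hc : ∀ i : Fin n, inDeg A i ≤ c' i)
    (hd : ∀ i : Fin n, outDeg A i ≤ d' i)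
    (hsumc : ∑ i, (c' i - inDeg A i) = s')
    (hsumd : ∑ i, (d' i - outDeg A i) = s')
    (hPrp : Prp (Finset.univ.val.map fun i => (c' i, d' i))) :
    ∃ A' : Finset (Fin n × Fin n),
      (∀ a ∈ A', a ∉ A) ∧
      (∀ v : Fin n, (v, v) ∉ A') ∧
      A'.card = s' ∧
      (∀ i : Fin n, deg (A ∪ A') i = (c' i, d' i)) ∧
      (∀ v : Fin n, deg (A ∪ A') v ∈ τ v) ∧
      Prp (degSeq (A ∪ A')) := by
  have hcΔ : ∀ i, c' i ≤ Δ := fun i => (hτΔ i _ (hτ i)).1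
  have hdΔ : ∀ i, d' i ≤ Δ := fun i => (hτΔ i _ (hτ i)).2
  have E : IsAdmissibleExtension A c' d' ∅ :=
    ⟨disjoint_empty_right A, fun _ => notMem_empty _, fun i => by simpa using hc i,
      fun i => by simpa using hd i⟩
  obtain ⟨A', E', hcard, hin, hout⟩ := E.exists_completion hcΔ hdΔ
    (by simpa [totalDeficit] using hsumc) (by simpa [totalDeficit] using hsumd) (by simpa using hs')
  have hdeg : ∀ i, deg (A ∪ A') i = (c' i, d' i) := fun i => by rw [deg, hin, hout]
  refine ⟨A', fun a ha haA => disjoint_left.1 E'.disjoint haA ha, E'.loopless,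
    by simpa using hcard, hdeg, fun v => hdeg v ▸ hτ v, ?_⟩
  rwa [degSeq, Multiset.map_congr rfl fun i _ => hdeg i]

/-- **Transfer of number-problem solutions to digraph solutions.** If there are
target degree pairs `(c' i, d' i) ∈ τ(v_i)` dominating the current degrees whose
total increase in each component is a common value `s' > 2(Δ*)²`, where all pairs
in the lists `τ` are componentwise at most `Δ* ≤ n - 1`, and the target multiset
fulfills `Prp`, then there is a loopless arc set `A'` disjoint from `A` of size `s'`
realizing exactly these degrees; in particular all degree-list constraints and the
sequence property hold for `D + A'`. -/
theorem number_solution_transfer (n : ℕ) (A : Finset (Fin n × Fin n))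
    (hA : ∀ v : Fin n, (v, v) ∉ A)
    (τ : Fin n → Set (ℕ × ℕ)) (Prp : Multiset (ℕ × ℕ) → Prop)
    (Δ : ℕ) (hΔn : Δ ≤ n - 1)
    (hτΔ : ∀ v : Fin n, ∀ p ∈ τ v, p.1 ≤ Δ ∧ p.2 ≤ Δ)
    (c' d' : Fin n → ℕ) (s' : ℕ)
    (hs' : 2 * Δ ^ 2 < s')
    (hτ : ∀ i : Fin n, (c' i, d' i) ∈ τ i)
    (hc : ∀ i : Fin n, inDeg A i ≤ c' i)
    (hd : ∀ i : Fin n, outDeg A i ≤ d' i)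
    (hsumc : ∑ i, (c' i - inDeg A i) = s')
    (hsumd : ∑ i, (d' i - outDeg A i) = s')
    (hPrp : Prp (Finset.univ.val.map fun i => (c' i, d' i))) :
    ∃ A' : Finset (Fin n × Fin n),
      (∀ a ∈ A', a ∉ A) ∧
      (∀ v : Fin n, (v, v) ∉ A') ∧
      A'.card = s' ∧
      (∀ i : Fin n, deg (A ∪ A') i = (c' i, d' i)) ∧
      (∀ v : Fin n, deg (A ∪ A') v ∈ τ v) ∧
      Prp (degSeq (A ∪ A')) :=
  number_solution_transfer_general n A τ Prp Δ hτΔ c' d' s' hs' hτ hc hd hsumc hsumd hPrp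
end

section
/- Let D = (V, A) be a digraph, s a nonnegative integer, τ a degree list function on V, and Δ* a nonnegative integer such that every pair in every list τ(v) has both components at most Δ*. Let C ⊆ V be a 2s(Δ_D + 1)-type set for (D, τ). Define D' := D[C] (the subdigraph induced by C) and, for each v ∈ C, τ_C(v) := { (i, j) ∈ {0, ..., Δ*}² : (i, j) + (|N_D^-(v) \ C|, |N_D^+(v) \ C|) ∈ τ(v) } (componentwise addition). Then there exists a loopless arc set A' ⊆ (V × V) \ A with |A'| ≤ s such that deg_{D+A'}(v) ∈ τ(v) for all v ∈ V, if and only if there exists a loopless arc set A'' ⊆ (C × C) \ A with |A''| ≤ s such that deg_{D'+A''}(v) ∈ τ_C(v) for all v ∈ C. -/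
/-- Maximum in- or outdegree in the digraph with arc set `A`. -/
def maxDeg {V : Type*} [Fintype V] [DecidableEq V] (A : Finset (V × V)) : ℕ :=
  Finset.univ.sup fun v => max (inDeg A v) (outDeg A v)

/-- Inneighbors of `v`. -/
def inNbrs {V : Type*} [Fintype V] [DecidableEq V] (A : Finset (V × V)) (v : V) :
    Finset V :=
  Finset.univ.filter fun u => (u, v) ∈ A

/-- Outneighbors of `v`. -/
def outNbrs {V : Type*} [Fintype V] [DecidableEq V] (A : Finset (V × V)) (v : V) :
    Finset V :=
  Finset.univ.filter fun u => (v, u) ∈ A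

/-- The satisfied vertices of type `t`: vertices `v` with `deg v + t ∈ τ v`
and `deg v ∈ τ v`, i.e. `T_{D,τ}(t) \ U`. -/
def satType {V : Type*} [Fintype V] [DecidableEq V]
    (A : Finset (V × V)) (τ : V → Finset (ℕ × ℕ)) (t : ℕ × ℕ) : Finset V :=
  Finset.univ.filter fun v => deg A v + t ∈ τ v ∧ deg A v ∈ τ v

/-- `C` is an `α`-type set for `(D, τ)`: it contains all unsatisfied vertices
and, for each type `t ≠ (0,0)`, exactly `min |T_{D,τ}(t) \ U| α` satisfied
vertices of type `t`. -/
def IsTypeSet {V : Type*} [Fintype V] [DecidableEq V]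
    (A : Finset (V × V)) (τ : V → Finset (ℕ × ℕ)) (α : ℕ) (C : Finset V) : Prop :=
  (∀ v : V, deg A v ∉ τ v → v ∈ C) ∧
  ∀ t : ℕ × ℕ, t ≠ (0, 0) →
    (satType A τ t ∩ C).card = min (satType A τ t).card α

/-- The adjusted degree list function `τ_C` on the kernel. -/
def tauC {V : Type*} [Fintype V] [DecidableEq V]
    (A : Finset (V × V)) (τ : V → Finset (ℕ × ℕ)) (Δ : ℕ) (C : Finset V) (v : V) :
    Finset (ℕ × ℕ) :=
  (Finset.range (Δ + 1) ×ˢ Finset.range (Δ + 1)).filter fun p =>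
    p + (((inNbrs A v) \ C).card, ((outNbrs A v) \ C).card) ∈ τ v

/-!
Take a completion `A'` with at most `s` arcs and an endpoint `x` of `A'` outside `C`. Since every
unsatisfied vertex lies in `C`, `x` is satisfied and has type `t = deg_{A'}(x) ≠ (0,0)`; as not all
satisfied vertices of type `t` lie in `C`, the set `C` contains `2s(Δ_D + 1)` of them. At most
`2s(Δ_D + 1)` vertices are endpoints of `A'` or `D`-neighbours of an endpoint of an arc of `A'`, and
`x` is one of them, so some satisfied `w ∈ C` of type `t` is none of them. Renaming `x` to `w` in
`A'` gives again a completion, with fewer endpoints outside `C`. Iterating, we obtain a completion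
inside `C × C`, and for those, satisfying `τ` on `V` is the same as satisfying `τ_C` on `D[C]`,
because vertices outside `C` are satisfied and keep their degree.
-/

open Finset

section Arcs

variable {V : Type*} [DecidableEq V]

lemma deg_union_of_disjoint {A B : Finset (V × V)} (h : Disjoint A B) (v : V) :
    deg (A ∪ B) v = deg A v + deg B v := by
  simp only [deg, inDeg, outDeg, filter_union, card_union_of_disjoint (disjoint_filter_filter h),
    Prod.mk_add_mk]

def endpoints (B : Finset (V × V)) : Finset V :=
  B.image Prod.fst ∪ B.image Prod.snd

lemma mem_endpoints {B : Finset (V × V)} {v : V} :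
    v ∈ endpoints B ↔ ∃ a ∈ B, a.1 = v ∨ a.2 = v := by
  simp only [endpoints, mem_union, mem_image]
  grind

lemma deg_eq_zero_iff {B : Finset (V × V)} {v : V} : deg B v = (0, 0) ↔ v ∉ endpoints B := by
  simp only [deg, inDeg, outDeg, Prod.mk.injEq, card_eq_zero, filter_eq_empty_iff,
    mem_endpoints]
  grind

lemma endpoints_subset_iff {B : Finset (V × V)} {C : Finset V} :
    endpoints B ⊆ C ↔ B ⊆ C ×ˢ C := by
  simp only [endpoints, subset_iff, mem_product]
  grind

lemma deg_map_prodCongr (σ : Equiv.Perm V) (B : Finset (V × V)) (v : V) :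
    deg (B.map (σ.prodCongr σ).toEmbedding) v = deg B (σ.symm v) := by
  simp only [deg, inDeg, outDeg, filter_map, card_map, Function.comp_def,
    Equiv.coe_toEmbedding, Equiv.prodCongr_apply, Prod.map_fst, Prod.map_snd,
    ← Equiv.eq_symm_apply]

lemma endpoints_map_prodCongr (σ : Equiv.Perm V) (B : Finset (V × V)) :
    endpoints (B.map (σ.prodCongr σ).toEmbedding) = (endpoints B).map σ.toEmbedding := by
  simp only [endpoints, map_eq_image, image_union, image_image]
  rfl

lemma endpoints_map_swap_sdiff_subset {A' : Finset (V × V)} {C : Finset V} {x w : V}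
    (hw : w ∉ endpoints A') (hwC : w ∈ C) :
    endpoints (A'.map ((Equiv.swap x w).prodCongr (Equiv.swap x w)).toEmbedding) \ C ⊆
      (endpoints A' \ C).erase x := by
  intro u hu
  rw [endpoints_map_prodCongr, mem_sdiff, mem_map] at hu
  obtain ⟨⟨e, he, rfl⟩, huC⟩ := hu
  have hew : e ≠ w := fun h => hw (h ▸ he)
  rcases eq_or_ne e x with rfl | hex
  · rw [Equiv.coe_toEmbedding, Equiv.swap_apply_left] at huC
    exact absurd hwC huC
  · rw [Equiv.coe_toEmbedding, Equiv.swap_apply_of_ne_of_ne hex hew] at huC ⊢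
    exact mem_erase.2 ⟨hex, mem_sdiff.2 ⟨he, huC⟩⟩

structure IsArcCompletion (A : Finset (V × V)) (τ : V → Finset (ℕ × ℕ)) (s : ℕ)
    (A' : Finset (V × V)) : Prop where
  notMem : ∀ a ∈ A', a ∉ A
  loopless : ∀ v : V, (v, v) ∉ A'
  card_le : A'.card ≤ s
  deg_mem : ∀ v : V, deg (A ∪ A') v ∈ τ v

lemma IsArcCompletion.disjoint {A A' : Finset (V × V)} {τ : V → Finset (ℕ × ℕ)} {s : ℕ}
    (hA' : IsArcCompletion A τ s A') : Disjoint A A' :=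
  disjoint_right.2 hA'.notMem

end Arcs

section Neighbours

variable {V : Type*} [Fintype V] [DecidableEq V]

lemma card_inNbrs (A : Finset (V × V)) (v : V) : (inNbrs A v).card = inDeg A v := by
  unfold inNbrs inDeg
  refine card_nbij' (fun u => (u, v)) Prod.fst ?_ ?_ ?_ ?_ <;>
    simp +contextual [Set.MapsTo, Set.LeftInvOn]
  grind

lemma card_outNbrs (A : Finset (V × V)) (v : V) : (outNbrs A v).card = outDeg A v := by
  unfold outNbrs outDeg
  refine card_nbij' (fun u => (v, u)) Prod.snd ?_ ?_ ?_ ?_ <;>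
    simp +contextual [Set.MapsTo, Set.LeftInvOn]
  grind

lemma inDeg_le_maxDeg (A : Finset (V × V)) (v : V) : inDeg A v ≤ maxDeg A :=
  (le_max_left _ _).trans (le_sup (f := fun v => max (inDeg A v) (outDeg A v)) (mem_univ v))

lemma outDeg_le_maxDeg (A : Finset (V × V)) (v : V) : outDeg A v ≤ maxDeg A :=
  (le_max_right _ _).trans (le_sup (f := fun v => max (inDeg A v) (outDeg A v)) (mem_univ v))

lemma deg_sdiff_product (A : Finset (V × V)) {C : Finset V} {v : V} (hv : v ∈ C) :
    deg (A \ C ×ˢ C) v = ((inNbrs A v \ C).card, (outNbrs A v \ C).card) := by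
  have hin : inNbrs (A \ C ×ˢ C) v = inNbrs A v \ C := by
    ext u; simp [inNbrs, hv]
  have hout : outNbrs (A \ C ×ˢ C) v = outNbrs A v \ C := by
    ext u; simp [outNbrs, hv]
  rw [← hin, ← hout, card_inNbrs, card_outNbrs, deg]

lemma deg_union_eq_deg_kernel_add (A : Finset (V × V)) {B : Finset (V × V)} {C : Finset V}
    (hB : B ⊆ C ×ˢ C) {v : V} (hv : v ∈ C) :
    deg (A ∪ B) v =
      deg (A ∩ C ×ˢ C ∪ B) v + ((inNbrs A v \ C).card, (outNbrs A v \ C).card) := by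
  have hsplit : A ∪ B = (A ∩ C ×ˢ C ∪ B) ∪ A \ C ×ˢ C := by
    ext a; simp only [mem_union, mem_inter, mem_sdiff]; tauto
  have hdisj : Disjoint (A ∩ C ×ˢ C ∪ B) (A \ C ×ˢ C) :=
    disjoint_left.2 fun a ha ha' => (mem_sdiff.1 ha').2 <|
      (mem_union.1 ha).elim (mem_of_mem_inter_right ·) (hB ·)
  rw [hsplit, deg_union_of_disjoint hdisj, deg_sdiff_product A hv]

end Neighbours

section Kernel

variable {V : Type*} [Fintype V] [DecidableEq V] {A B : Finset (V × V)} {τ : V → Finset (ℕ × ℕ)}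
  {Δ : ℕ} {C : Finset V}

lemma mem_tauC_iff (hτΔ : ∀ v : V, ∀ p ∈ τ v, p.1 ≤ Δ ∧ p.2 ≤ Δ) {v : V} {p : ℕ × ℕ} :
    p ∈ tauC A τ Δ C v ↔ p + ((inNbrs A v \ C).card, (outNbrs A v \ C).card) ∈ τ v := by
  refine ⟨fun h => (mem_filter.1 h).2, fun h => mem_filter.2 ⟨?_, h⟩⟩
  have := hτΔ v _ h
  simp only [Prod.fst_add, Prod.snd_add] at this
  simp only [mem_product, mem_range]
  omega

lemma forall_deg_mem_iff_kernel (hτΔ : ∀ v : V, ∀ p ∈ τ v, p.1 ≤ Δ ∧ p.2 ≤ Δ)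
    (hU : ∀ v : V, deg A v ∉ τ v → v ∈ C) (hBC : B ⊆ C ×ˢ C) (hBA : ∀ a ∈ B, a ∉ A) :
    (∀ v : V, deg (A ∪ B) v ∈ τ v) ↔ ∀ v ∈ C, deg (A ∩ C ×ˢ C ∪ B) v ∈ tauC A τ Δ C v := by
  simp only [mem_tauC_iff hτΔ]
  refine ⟨fun h v hv => deg_union_eq_deg_kernel_add A hBC hv ▸ h v, fun h v => ?_⟩
  by_cases hv : v ∈ C
  · exact deg_union_eq_deg_kernel_add A hBC hv ▸ h v hv
  · have hBv : deg B v = (0, 0) :=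
      deg_eq_zero_iff.2 fun hvB => hv (endpoints_subset_iff.2 hBC hvB)
    rw [deg_union_of_disjoint (disjoint_right.2 hBA), hBv]
    exact not_not.1 (mt (hU v) hv)

end Kernel

section Replacement

variable {V : Type*} [Fintype V] [DecidableEq V] {A A' : Finset (V × V)} {τ : V → Finset (ℕ × ℕ)}
  {s : ℕ} {C : Finset V}

/-- A vertex outside this set can take the place of an endpoint of an arc of `A'` without the
renamed arc falling into `A` or meeting another arc of `A'`. -/
def blockedVertices (A A' : Finset (V × V)) : Finset V :=
  A'.biUnion fun a => insert a.1 (insert a.2 (inNbrs A a.2 ∪ outNbrs A a.1))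

lemma endpoints_subset_blockedVertices : endpoints A' ⊆ blockedVertices A A' := by
  intro v hv
  obtain ⟨a, ha, hav⟩ := mem_endpoints.1 hv
  exact mem_biUnion.2 ⟨a, ha, by rcases hav with rfl | rfl <;> simp⟩

lemma card_blockedVertices_le :
    (blockedVertices A A').card ≤ A'.card * (2 * (maxDeg A + 1)) := by
  refine card_biUnion_le_card_mul _ _ _ fun a _ => ?_
  calc _ ≤ (inNbrs A a.2 ∪ outNbrs A a.1).card + 2 :=
        (card_insert_le _ _).trans (Nat.succ_le_succ (card_insert_le _ _))
    _ ≤ (inNbrs A a.2).card + (outNbrs A a.1).card + 2 := by gcongr; exact card_union_le _ _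
    _ ≤ 2 * (maxDeg A + 1) := by
        rw [card_inNbrs, card_outNbrs]
        linarith [inDeg_le_maxDeg A a.2, outDeg_le_maxDeg A a.1]

lemma card_satType_inter_eq {α : ℕ} (hC : IsTypeSet A τ α C) {t : ℕ × ℕ} (ht : t ≠ (0, 0))
    {x : V} (hx : x ∈ satType A τ t) (hxC : x ∉ C) : (satType A τ t ∩ C).card = α := by
  have h := hC.2 t ht
  have hlt : (satType A τ t ∩ C).card < (satType A τ t).card :=
    card_lt_card ⟨inter_subset_left, fun hsub => hxC (mem_inter.1 (hsub hx)).2⟩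
  omega

lemma exists_mem_satType_inter_notMem {α : ℕ} (hC : IsTypeSet A τ α C) {t : ℕ × ℕ}
    (ht : t ≠ (0, 0)) {x : V} (hx : x ∈ satType A τ t) (hxC : x ∉ C) {F : Finset V}
    (hxF : x ∈ F) (hF : F.card ≤ α) : ∃ w ∈ satType A τ t ∩ C, w ∉ F := by
  have hlt : (F ∩ C).card < (satType A τ t ∩ C).card := by
    rw [card_satType_inter_eq hC ht hx hxC]
    exact (card_lt_card ⟨inter_subset_left, fun hsub => hxC (mem_inter.1 (hsub hxF)).2⟩).trans_le hF
  obtain ⟨w, hw, hwFC⟩ := exists_mem_notMem_of_card_lt_card hlt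
  exact ⟨w, hw, fun hwF => hwFC (mem_inter.2 ⟨hwF, (mem_inter.1 hw).2⟩)⟩

lemma IsArcCompletion.map_swap (hA' : IsArcCompletion A τ s A') {x w : V}
    (hw : w ∉ blockedVertices A A') (hx : deg A x ∈ τ x) (hwx : deg A w + deg A' x ∈ τ w) :
    IsArcCompletion A τ s (A'.map ((Equiv.swap x w).prodCongr (Equiv.swap x w)).toEmbedding) := by
  have hnotMem : ∀ b ∈ A'.map ((Equiv.swap x w).prodCongr (Equiv.swap x w)).toEmbedding,
      b ∉ A := by
    simp only [blockedVertices, mem_biUnion, mem_insert, mem_union, inNbrs, outNbrs, mem_filter,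
      mem_univ, true_and, not_exists, not_and] at hw
    simp only [mem_map, Equiv.coe_toEmbedding, Equiv.prodCongr_apply, forall_exists_index,
      and_imp]
    rintro _ ⟨a₁, a₂⟩ ha rfl
    have hnotA := hA'.notMem _ ha
    have hloop := hA'.loopless a₁
    have hfree := hw _ ha
    simp only [Prod.map, Equiv.swap_apply_def]
    grind
  refine ⟨hnotMem, fun v hv => ?_, (card_map _).trans_le hA'.card_le, fun v => ?_⟩
  · obtain ⟨a, ha, hav⟩ := mem_map.1 hv
    rw [Equiv.coe_toEmbedding, ← Equiv.eq_symm_apply] at hav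
    exact hA'.loopless _ (hav ▸ ha)
  rw [deg_union_of_disjoint (disjoint_right.2 hnotMem), deg_map_prodCongr, Equiv.symm_swap]
  rcases eq_or_ne v w with rfl | hvw
  · rwa [Equiv.swap_apply_right]
  rcases eq_or_ne v x with rfl | hvx
  · have : deg A' w = (0, 0) :=
      deg_eq_zero_iff.2 fun h => hw (endpoints_subset_blockedVertices h)
    rwa [Equiv.swap_apply_left, this, Prod.mk_zero_zero, add_zero]
  · rw [Equiv.swap_apply_of_ne_of_ne hvx hvw, ← deg_union_of_disjoint hA'.disjoint]
    exact hA'.deg_mem v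

lemma IsArcCompletion.exists_endpoints_sdiff_subset_erase
    (hC : IsTypeSet A τ (2 * s * (maxDeg A + 1)) C) (hA' : IsArcCompletion A τ s A') {x : V}
    (hx : x ∈ endpoints A') (hxC : x ∉ C) :
    ∃ B, IsArcCompletion A τ s B ∧ endpoints B \ C ⊆ (endpoints A' \ C).erase x := by
  have hxτ : deg A x ∈ τ x := not_not.1 (mt (hC.1 x) hxC)
  have hxt : x ∈ satType A τ (deg A' x) :=
    mem_filter.2 ⟨mem_univ x, deg_union_of_disjoint hA'.disjoint x ▸ hA'.deg_mem x, hxτ⟩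
  have hcard : (blockedVertices A A').card ≤ 2 * s * (maxDeg A + 1) :=
    card_blockedVertices_le.trans <| by rw [mul_comm 2 s, mul_assoc]; gcongr; exact hA'.card_le
  obtain ⟨w, hw, hwF⟩ := exists_mem_satType_inter_notMem hC (mt deg_eq_zero_iff.1 (not_not.2 hx))
    hxt hxC (endpoints_subset_blockedVertices hx) hcard
  obtain ⟨hwt, hwC⟩ := mem_inter.1 hw
  exact ⟨_, hA'.map_swap hwF hxτ (mem_filter.1 hwt).2.1,
    endpoints_map_swap_sdiff_subset (fun h => hwF (endpoints_subset_blockedVertices h)) hwC⟩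

lemma IsArcCompletion.exists_subset_product (hC : IsTypeSet A τ (2 * s * (maxDeg A + 1)) C)
    (hA' : IsArcCompletion A τ s A') : ∃ B, B ⊆ C ×ˢ C ∧ IsArcCompletion A τ s B := by
  induction h : (endpoints A' \ C).card using Nat.strong_induction_on generalizing A' with
  | _ n ih =>
  obtain hE | ⟨x, hx⟩ := (endpoints A' \ C).eq_empty_or_nonempty
  · exact ⟨A', endpoints_subset_iff.1 (sdiff_eq_empty_iff_subset.1 hE), hA'⟩
  obtain ⟨B, hB, hBE⟩ :=
    hA'.exists_endpoints_sdiff_subset_erase hC (mem_sdiff.1 hx).1 (mem_sdiff.1 hx).2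
  exact ih _ (h ▸ (card_le_card hBE).trans_lt (card_erase_lt_of_mem hx)) hB rfl

end Replacement

theorem ddconc_kernel_correct_general {V : Type*} [Fintype V] [DecidableEq V]
    (A : Finset (V × V))
    (s : ℕ) (τ : V → Finset (ℕ × ℕ)) (Δ : ℕ)
    (hτΔ : ∀ v : V, ∀ p ∈ τ v, p.1 ≤ Δ ∧ p.2 ≤ Δ)
    (C : Finset V)
    (hC : IsTypeSet A τ (2 * s * (maxDeg A + 1)) C) :
    (∃ A' : Finset (V × V),
      (∀ a ∈ A', a ∉ A) ∧ (∀ v : V, (v, v) ∉ A') ∧ A'.card ≤ s ∧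
      (∀ v : V, deg (A ∪ A') v ∈ τ v)) ↔
    (∃ A'' : Finset (V × V),
      A'' ⊆ C ×ˢ C ∧
      (∀ a ∈ A'', a ∉ A) ∧ (∀ v : V, (v, v) ∉ A'') ∧ A''.card ≤ s ∧
      (∀ v ∈ C, deg ((A ∩ C ×ˢ C) ∪ A'') v ∈ tauC A τ Δ C v)) := by
  constructor
  · rintro ⟨A', hnotMem, hloop, hcard, hdeg⟩
    obtain ⟨B, hBC, hB⟩ :=
      IsArcCompletion.exists_subset_product hC ⟨hnotMem, hloop, hcard, hdeg⟩
    exact ⟨B, hBC, hB.notMem, hB.loopless, hB.card_le,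
      (forall_deg_mem_iff_kernel hτΔ hC.1 hBC hB.notMem).1 hB.deg_mem⟩
  · rintro ⟨A'', hA''C, hnotMem, hloop, hcard, hdeg⟩
    exact ⟨A'', hnotMem, hloop, hcard, (forall_deg_mem_iff_kernel hτΔ hC.1 hA''C hnotMem).2 hdeg⟩

/-- **Correctness of the DDConC kernelization.** The original instance is a
yes-instance if and only if the reduced instance `(D[C], s, τ_C)` is a
yes-instance. -/
theorem ddconc_kernel_correct {V : Type*} [Fintype V] [DecidableEq V]
    (A : Finset (V × V)) (hA : ∀ v : V, (v, v) ∉ A)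
    (s : ℕ) (τ : V → Finset (ℕ × ℕ)) (Δ : ℕ)
    (hτΔ : ∀ v : V, ∀ p ∈ τ v, p.1 ≤ Δ ∧ p.2 ≤ Δ)
    (C : Finset V)
    (hC : IsTypeSet A τ (2 * s * (maxDeg A + 1)) C) :
    (∃ A' : Finset (V × V),
      (∀ a ∈ A', a ∉ A) ∧ (∀ v : V, (v, v) ∉ A') ∧ A'.card ≤ s ∧
      (∀ v : V, deg (A ∪ A') v ∈ τ v)) ↔
    (∃ A'' : Finset (V × V),
      A'' ⊆ C ×ˢ C ∧
      (∀ a ∈ A'', a ∉ A) ∧ (∀ v : V, (v, v) ∉ A'') ∧ A''.card ≤ s ∧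
      (∀ v ∈ C, deg ((A ∩ C ×ˢ C) ∪ A'') v ∈ tauC A τ Δ C v)) :=
  ddconc_kernel_correct_general A s τ Δ hτΔ C hC
end
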